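/- Let N ≥ 3, v, v_* ∈ ℝ^N with v ≠ v_*, and α ≥ 1. With R_α(x) = ∫_{u ∈ S^{N−2}} [ (1 + |v|²(1−x²) + |v_*|² x² + 2x√(1−x²) |v−v_*| (u·v_*))^α − (1+|v|²)^α ] du, the derivative of R_α satisfies: there is a constant C_α > 0 depending only on α and N such that |R'_α(x)| ≤ C_α ⟨v⟩^{2α} ⟨v_*⟩^{2α} for all x ∈ [0, √2/2]. -/

import Mathlib

open MeasureTheory Real Set
open scoped InnerProductSpace

noncomputable section

set_option maxHeartbeats 1000000

/-- `ℝ^N` as a Euclidean space. -/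
abbrev V (N : ℕ) : Type := EuclideanSpace ℝ (Fin N)

/-- The surface measure on the unit sphere of `ℝ^n`. -/
def sphVol (n : ℕ) : Measure (Metric.sphere (0 : EuclideanSpace ℝ (Fin n)) 1) :=
  (volume : Measure (EuclideanSpace ℝ (Fin n))).toSphere

/-- `⟨v⟩ = (1+|v|²)^{1/2}`. -/
def jap {N : ℕ} (v : V N) : ℝ := Real.sqrt (1 + ‖v‖ ^ 2)

/-- The function
`R_α(x) = ∫_{S^{N-2}} [(1 + |v|²(1-x²) + |v_*|²x² + 2x√(1-x²)|v-v_*|(u·v_*))^α - (1+|v|²)^α] du`,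
where the unit sphere `S^{N-2}` of the hyperplane orthogonal to `v - v_*` is
parametrized by a linear isometry `e : ℝ^{N-1} → ℝ^N` onto this hyperplane. -/
def Rfun {N : ℕ} (v vs : V N) (e : EuclideanSpace ℝ (Fin (N - 1)) →ₗᵢ[ℝ] V N)
    (α : ℝ) (x : ℝ) : ℝ :=
  ∫ u : Metric.sphere (0 : EuclideanSpace ℝ (Fin (N - 1))) 1,
    ((1 + ‖v‖ ^ 2 * (1 - x ^ 2) + ‖vs‖ ^ 2 * x ^ 2
        + 2 * x * Real.sqrt (1 - x ^ 2) * ‖v - vs‖ *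
          ⟪(e (u : EuclideanSpace ℝ (Fin (N - 1))) : V N), vs⟫_ℝ) ^ α
      - (1 + ‖v‖ ^ 2) ^ α) ∂(sphVol (N - 1))

private lemma sqrt_two_div_two_le : Real.sqrt 2 / 2 ≤ 17 / 24 := by
  nlinarith [Real.sq_sqrt (show (0:ℝ) ≤ 2 by norm_num), Real.sqrt_nonneg 2]

private lemma aux_c {x : ℝ} (hx : |x| ≤ 5/6) :
    1/2 ≤ Real.sqrt (1 - x^2) ∧ Real.sqrt (1 - x^2) ≤ 1 ∧ Real.sqrt (1-x^2)^2 = 1 - x^2 := by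
  have h1 : x^2 ≤ 25/36 := by nlinarith [sq_abs x, abs_nonneg x]
  have h2 : (0:ℝ) ≤ 1 - x^2 := by linarith
  have hsq : Real.sqrt (1-x^2)^2 = 1 - x^2 := Real.sq_sqrt h2
  refine ⟨?_, ?_, hsq⟩
  · nlinarith [Real.sqrt_nonneg (1-x^2)]
  · nlinarith [Real.sqrt_nonneg (1-x^2)]

private lemma base_bounds {A B n t p a b x : ℝ} (ha : 0 ≤ a) (hb : 0 ≤ b) (hp : 0 ≤ p)
    (hA : A = p^2 + a^2) (hB : B = p^2 + b^2) (ht : |t| ≤ p) (hn0 : 0 ≤ n) (hnab : n ≤ a + b)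
    (hx : |x| ≤ 5/6) :
    1 ≤ 1 + A*(1-x^2) + B*x^2 + 2*x*Real.sqrt (1-x^2)*n*t ∧
    1 + A*(1-x^2) + B*x^2 + 2*x*Real.sqrt (1-x^2)*n*t ≤ 3*(1+A)*(1+B) := by
  obtain ⟨hc1, hc2, hc3⟩ := aux_c hx
  have hc0 : 0 ≤ Real.sqrt (1 - x^2) := Real.sqrt_nonneg _
  set c := Real.sqrt (1 - x^2) with hc
  clear_value c
  have hy0 : 0 ≤ |x| := abs_nonneg x
  have hy2 : |x|^2 = x^2 := sq_abs x
  have habs : |2*x*c*n*t| ≤ 2 * (|x| * c * n * p) := by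
    calc |2*x*c*n*t| = 2 * (|x| * c * n * |t|) := by
          simp [abs_mul, abs_of_nonneg hc0, abs_of_nonneg hn0]; ring
      _ ≤ 2 * (|x| * c * n * p) := by gcongr
  obtain ⟨hlo, hhi⟩ := abs_le.mp habs
  have hprod : 0 ≤ (a + b - n) * (|x| * c * p) :=
    mul_nonneg (by linarith) (by positivity)
  constructor
  · nlinarith [sq_nonneg (c * a - |x| * p), sq_nonneg (|x| * b - c * p)]
  · have hA0 : 0 ≤ A := by nlinarith [sq_nonneg p, sq_nonneg a]
    have hB0 : 0 ≤ B := by nlinarith [sq_nonneg p, sq_nonneg b]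
    have hcc : c^2 ≤ 1 := by nlinarith
    have hyy : x^2 ≤ 1 := by nlinarith
    have h1x : (0:ℝ) ≤ 1 - x^2 := by nlinarith
    have e1 : 2 * (|x| * c * n * p) ≤ 2 * (|x| * c * (a+b) * p) := by linarith [hprod]
    have e2 : 2 * (|x| * c * (a+b) * p) ≤ (c^2*a^2 + |x|^2*p^2) + (|x|^2*b^2 + c^2*p^2) := by
      nlinarith [sq_nonneg (c * a - |x| * p), sq_nonneg (|x| * b - c * p)]
    have hc3a : c^2*a^2 = (1-x^2)*a^2 := by rw [hc3]
    have hc3p : c^2*p^2 = (1-x^2)*p^2 := by rw [hc3]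
    have hy2p : |x|^2*p^2 = x^2*p^2 := by rw [hy2]
    have hy2b : |x|^2*b^2 = x^2*b^2 := by rw [hy2]
    have e3 : (c^2*a^2 + |x|^2*p^2) + (|x|^2*b^2 + c^2*p^2) ≤ A + B := by
      rw [hc3a, hc3p, hy2p, hy2b, hA, hB]
      nlinarith [mul_nonneg h1x (sq_nonneg b), mul_nonneg (sq_nonneg x) (sq_nonneg a), sq_nonneg p]
    nlinarith [mul_nonneg hA0 hB0, mul_nonneg hA0 (sq_nonneg x), mul_nonneg hB0 h1x]

private lemma dbase_bound {A B n t p a b x : ℝ} (ha : 0 ≤ a) (hb : 0 ≤ b) (hp : 0 ≤ p)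
    (hA : A = p^2 + a^2) (hB : B = p^2 + b^2) (ht : |t| ≤ p) (hn0 : 0 ≤ n) (hnab : n ≤ a + b)
    (hx : |x| ≤ 5/6) :
    |(-(2*x))*A + 2*x*B + (2*Real.sqrt (1-x^2) - 2*x^2/Real.sqrt (1-x^2))*(n*t)| ≤ 5*(1+A)*(1+B) := by
  have h1 : x^2 ≤ 25/36 := by nlinarith [sq_abs x, abs_nonneg x]
  have h2 : (0:ℝ) ≤ 1 - x^2 := by linarith
  have hsq : Real.sqrt (1-x^2)^2 = 1 - x^2 := Real.sq_sqrt h2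
  have hc01 : 0 ≤ Real.sqrt (1 - x^2) := Real.sqrt_nonneg _
  set c := Real.sqrt (1 - x^2) with hc
  clear_value c
  have hc1 : 1/2 ≤ c := by nlinarith
  have hc2 : c ≤ 1 := by nlinarith
  have hcpos : 0 < c := by linarith
  have hA0 : 0 ≤ A := by nlinarith [sq_nonneg p, sq_nonneg a]
  have hB0 : 0 ≤ B := by nlinarith [sq_nonneg p, sq_nonneg b]
  have hD3 : 2*x^2/c ≤ 3 := by
    rw [div_le_iff₀ hcpos]; nlinarith
  have hD0 : 0 ≤ 2*x^2/c := by positivity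
  have hZ : |2*c - 2*x^2/c| ≤ 3 := abs_le.mpr ⟨by linarith, by linarith⟩
  have hnt : |n*t| ≤ (a+b)*p := by
    rw [abs_mul, abs_of_nonneg hn0]
    calc n * |t| ≤ n * p := by gcongr
      _ ≤ (a+b)*p := by gcongr
  have hZnt : |2*c - 2*x^2/c| * |n*t| ≤ 3*((a+b)*p) :=
    mul_le_mul hZ hnt (abs_nonneg _) (by norm_num)
  have e1 : |(-(2*x))*A| = 2 * |x| * A := by
    rw [abs_mul, abs_neg, abs_mul, abs_two, abs_of_nonneg hA0]
  have e2 : |2*x*B| = 2 * |x| * B := by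
    rw [abs_mul, abs_mul, abs_two, abs_of_nonneg hB0]
  calc |(-(2*x))*A + 2*x*B + (2*c - 2*x^2/c)*(n*t)|
      ≤ |(-(2*x))*A + 2*x*B| + |(2*c - 2*x^2/c)*(n*t)| := abs_add_le _ _
    _ ≤ ( |(-(2*x))*A| + |2*x*B| ) + |2*c - 2*x^2/c| * |n*t| := by
        rw [abs_mul]; exact add_le_add_left (abs_add_le _ _) _
    _ ≤ (2 * |x| * A + 2 * |x| * B) + 3 * ((a+b)*p) := by
        rw [e1, e2]; exact add_le_add_right hZnt _
    _ ≤ 5*(1+A)*(1+B) := by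
        nlinarith [sq_nonneg (a-p), sq_nonneg (b-p), mul_nonneg hA0 hB0, abs_nonneg x,
          mul_nonneg hA0 (abs_nonneg x), mul_nonneg hB0 (abs_nonneg x)]

private lemma hasDerivAt_base (A B n t : ℝ) {x : ℝ} (hx : |x| ≤ 5/6) :
    HasDerivAt (fun y : ℝ => 1 + A*(1-y^2) + B*y^2 + 2*y*Real.sqrt (1-y^2)*n*t)
      ((-(2*x))*A + 2*x*B + (2*Real.sqrt (1-x^2) - 2*x^2/Real.sqrt (1-x^2))*(n*t)) x := by
  have h1 : x^2 ≤ 25/36 := by nlinarith [sq_abs x, abs_nonneg x]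
  have h2 : (0:ℝ) < 1 - x^2 := by linarith
  have hne : 1 - x^2 ≠ 0 := ne_of_gt h2
  have hcpos : 0 < Real.sqrt (1 - x^2) := Real.sqrt_pos.mpr h2
  have hq : HasDerivAt (fun y : ℝ => 1 - y^2) (-(2*x)) x := by
    simpa using (hasDerivAt_pow 2 x).const_sub 1
  have hs : HasDerivAt (fun y : ℝ => Real.sqrt (1 - y^2)) ((-(2*x)) / (2*Real.sqrt (1-x^2))) x :=
    hq.sqrt hne
  have h2y : HasDerivAt (fun y : ℝ => 2*y) 2 x := by
    simpa using (hasDerivAt_id x).const_mul 2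
  have hprod : HasDerivAt (fun y : ℝ => 2*y*Real.sqrt (1-y^2))
      (2*Real.sqrt (1-x^2) + 2*x*((-(2*x))/(2*Real.sqrt (1-x^2)))) x := h2y.mul hs
  have hT := (hprod.mul_const n).mul_const t
  have hApart : HasDerivAt (fun y : ℝ => A*(1-y^2)) (A*(-(2*x))) x := hq.const_mul A
  have h1A : HasDerivAt (fun y : ℝ => 1 + A*(1-y^2)) (A*(-(2*x))) x := hApart.const_add 1
  have hBpart : HasDerivAt (fun y : ℝ => B*y^2) (B*(2*x)) x := by
    simpa using (hasDerivAt_pow 2 x).const_mul B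
  have hfull := (h1A.add hBpart).add hT
  refine hfull.congr_deriv ?_
  field_simp
  ring

/-- The geometric facts coming from `range e = (span {v - vs})ᗮ`. -/
private lemma geom_facts (N : ℕ) (v vs : V N) (e : EuclideanSpace ℝ (Fin (N - 1)) →ₗᵢ[ℝ] V N)
    (hrange : Set.range e = ((Submodule.span ℝ {v - vs})ᗮ : Set (V N)))
    (u : Metric.sphere (0 : EuclideanSpace ℝ (Fin (N - 1))) 1) :
    ∃ p a b : ℝ, 0 ≤ a ∧ 0 ≤ b ∧ 0 ≤ p ∧
      ‖v‖^2 = p^2 + a^2 ∧ ‖vs‖^2 = p^2 + b^2 ∧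
      |⟪e (u : EuclideanSpace ℝ (Fin (N - 1))), vs⟫_ℝ| ≤ p ∧ ‖v - vs‖ ≤ a + b := by
  set K : Submodule ℝ (V N) := (Submodule.span ℝ {v - vs})ᗮ with hK
  set p : V N := (K.orthogonalProjectionOnto v : V N) with hp
  have hmem : e (u : EuclideanSpace ℝ (Fin (N - 1))) ∈ K := by
    have : e (u : EuclideanSpace ℝ (Fin (N - 1))) ∈ Set.range e := ⟨_, rfl⟩
    rw [hrange] at this
    exact this
  have hnorm : ‖e (u : EuclideanSpace ℝ (Fin (N - 1)))‖ = 1 := by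
    rw [e.norm_map]
    exact mem_sphere_zero_iff_norm.mp u.2
  have hvp : v - p ∈ Kᗮ := K.sub_starProjection_mem_orthogonal v
  have hvvs : v - vs ∈ Kᗮ :=
    (Submodule.span ℝ {v - vs}).le_orthogonal_orthogonal (Submodule.mem_span_singleton_self _)
  have hprojeq : K.orthogonalProjectionOnto vs = K.orthogonalProjectionOnto v := by
    have h0 : K.orthogonalProjectionOnto (v - vs) = 0 :=
      Submodule.orthogonalProjectionOnto_apply_of_mem_orthogonal hvvs
    have := map_sub (K.orthogonalProjectionOnto) v vs
    rw [h0] at this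
    exact (sub_eq_zero.mp this.symm).symm
  have hvsp : vs - p ∈ Kᗮ := by
    have h : vs - (K.orthogonalProjectionOnto vs : V N) ∈ Kᗮ := K.sub_starProjection_mem_orthogonal vs
    rwa [hprojeq] at h
  have hinner0 : ⟪e (u : EuclideanSpace ℝ (Fin (N - 1))), vs - p⟫_ℝ = 0 :=
    (Submodule.mem_orthogonal K (vs - p)).mp hvsp _ hmem
  have hinner : ⟪e (u : EuclideanSpace ℝ (Fin (N - 1))), vs⟫_ℝ
      = ⟪e (u : EuclideanSpace ℝ (Fin (N - 1))), p⟫_ℝ := by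
    have := inner_sub_right (𝕜 := ℝ) (e (u : EuclideanSpace ℝ (Fin (N - 1)))) vs p
    rw [hinner0] at this
    linarith [this]
  have htb : |⟪e (u : EuclideanSpace ℝ (Fin (N - 1))), vs⟫_ℝ| ≤ ‖p‖ := by
    rw [hinner]
    calc |⟪e (u : EuclideanSpace ℝ (Fin (N - 1))), p⟫_ℝ|
        ≤ ‖e (u : EuclideanSpace ℝ (Fin (N - 1)))‖ * ‖p‖ := abs_real_inner_le_norm _ _
      _ = ‖p‖ := by rw [hnorm, one_mul]
  have hpK : p ∈ K := (K.orthogonalProjectionOnto v).2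
  have hpyth_v : ‖v‖^2 = ‖p‖^2 + ‖v - p‖^2 := by
    have h0 : ⟪p, v - p⟫_ℝ = 0 := (Submodule.mem_orthogonal K (v - p)).mp hvp _ hpK
    have : ‖p + (v - p)‖^2 = ‖p‖^2 + 2*⟪p, v - p⟫_ℝ + ‖v - p‖^2 := norm_add_sq_real _ _
    rw [h0] at this
    simpa using this
  have hpyth_vs : ‖vs‖^2 = ‖p‖^2 + ‖vs - p‖^2 := by
    have h0 : ⟪p, vs - p⟫_ℝ = 0 := (Submodule.mem_orthogonal K (vs - p)).mp hvsp _ hpK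
    have : ‖p + (vs - p)‖^2 = ‖p‖^2 + 2*⟪p, vs - p⟫_ℝ + ‖vs - p‖^2 := norm_add_sq_real _ _
    rw [h0] at this
    simpa using this
  have htri : ‖v - vs‖ ≤ ‖v - p‖ + ‖vs - p‖ := by
    have : v - vs = (v - p) - (vs - p) := by abel
    rw [this]
    exact norm_sub_le _ _
  exact ⟨‖p‖, ‖v - p‖, ‖vs - p‖, norm_nonneg _, norm_nonneg _, norm_nonneg _,
    hpyth_v, hpyth_vs, htb, htri⟩

/-- for `α ≥ 1`, there is `C_α > 0` depending only on `α` and `N` such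
that `|R'_α(x)| ≤ C_α ⟨v⟩^{2α} ⟨v_*⟩^{2α}` for all `x ∈ [0, √2/2]`. -/
theorem Rfun_deriv_bound
    (N : ℕ) (hN : 3 ≤ N) (α : ℝ) (hα : 1 ≤ α) :
    ∃ C : ℝ, 0 < C ∧
      ∀ (v vs : V N), v ≠ vs →
        ∀ e : EuclideanSpace ℝ (Fin (N - 1)) →ₗᵢ[ℝ] V N,
          Set.range e = ((Submodule.span ℝ {v - vs})ᗮ : Set (V N)) →
          ∀ x ∈ Set.Icc (0 : ℝ) (Real.sqrt 2 / 2),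
            |deriv (Rfun v vs e α) x| ≤ C * jap v ^ (2 * α) * jap vs ^ (2 * α) := by
  have hα0 : (0:ℝ) ≤ α := by linarith
  have hα1 : (0:ℝ) ≤ α - 1 := by linarith
  set μ : Measure (Metric.sphere (0 : EuclideanSpace ℝ (Fin (N - 1))) 1) := sphVol (N - 1)
    with hμ
  haveI hfin : IsFiniteMeasure μ := by
    rw [hμ]; unfold sphVol; infer_instance
  set T : ℝ := (μ Set.univ).toReal with hT
  have hT0 : 0 ≤ T := ENNReal.toReal_nonneg
  have hC0 : 0 ≤ 5 * α * 3 ^ (α - 1) * T :=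
    mul_nonneg (mul_nonneg (mul_nonneg (by norm_num) hα0) (Real.rpow_nonneg (by norm_num) _)) hT0
  refine ⟨5 * α * 3 ^ (α - 1) * T + 1, by linarith, ?_⟩
  intro v vs hne e hrange x hx
  -- notation
  set JA : ℝ := 1 + ‖v‖^2 with hJA
  set JB : ℝ := 1 + ‖vs‖^2 with hJB
  have hJA1 : 1 ≤ JA := by rw [hJA]; nlinarith [sq_nonneg ‖v‖]
  have hJB1 : 1 ≤ JB := by rw [hJB]; nlinarith [sq_nonneg ‖vs‖]
  have hJA0 : 0 < JA := by linarith
  have hJB0 : 0 < JB := by linarith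
  -- the integrand and its derivative
  set F : ℝ → Metric.sphere (0 : EuclideanSpace ℝ (Fin (N - 1))) 1 → ℝ := fun y u =>
    ((1 + ‖v‖ ^ 2 * (1 - y ^ 2) + ‖vs‖ ^ 2 * y ^ 2
        + 2 * y * Real.sqrt (1 - y ^ 2) * ‖v - vs‖ *
          ⟪(e (u : EuclideanSpace ℝ (Fin (N - 1))) : V N), vs⟫_ℝ) ^ α
      - (1 + ‖v‖ ^ 2) ^ α) with hF
  set F' : ℝ → Metric.sphere (0 : EuclideanSpace ℝ (Fin (N - 1))) 1 → ℝ := fun y u =>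
    ((-(2*y))*(‖v‖ ^ 2) + 2*y*(‖vs‖ ^ 2)
        + (2*Real.sqrt (1-y^2) - 2*y^2/Real.sqrt (1-y^2))
          * (‖v - vs‖ * ⟪(e (u : EuclideanSpace ℝ (Fin (N - 1))) : V N), vs⟫_ℝ)) * α *
      (1 + ‖v‖ ^ 2 * (1 - y ^ 2) + ‖vs‖ ^ 2 * y ^ 2
        + 2 * y * Real.sqrt (1 - y ^ 2) * ‖v - vs‖ *
          ⟪(e (u : EuclideanSpace ℝ (Fin (N - 1))) : V N), vs⟫_ℝ) ^ (α - 1) with hF'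
  -- |x'| ≤ 5/6 for x' in the ball
  have hx56 : ∀ x' ∈ Metric.ball x (1/8 : ℝ), |x'| ≤ 5/6 := by
    intro x' hx'
    have hd : |x' - x| < 1/8 := by
      rw [← Real.dist_eq]; exact hx'
    have h1 := hx.1
    have h2 := hx.2.trans sqrt_two_div_two_le
    rw [abs_lt] at hd
    rw [abs_le]
    constructor <;> [linarith [hd.1]; linarith [hd.2]]
  have hxx : |x| ≤ 5/6 := by
    have h1 := hx.1
    have h2 := hx.2.trans sqrt_two_div_two_le
    rw [abs_le]; constructor <;> linarith
  -- continuity in u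
  have hcont_t : Continuous fun u : Metric.sphere (0 : EuclideanSpace ℝ (Fin (N - 1))) 1 =>
      ⟪(e (u : EuclideanSpace ℝ (Fin (N - 1))) : V N), vs⟫_ℝ :=
    Continuous.inner (e.continuous.comp continuous_subtype_val) continuous_const
  have hcont_base : ∀ y : ℝ, Continuous fun u : Metric.sphere (0 : EuclideanSpace ℝ (Fin (N - 1))) 1 =>
      (1 + ‖v‖ ^ 2 * (1 - y ^ 2) + ‖vs‖ ^ 2 * y ^ 2
        + 2 * y * Real.sqrt (1 - y ^ 2) * ‖v - vs‖ *
          ⟪(e (u : EuclideanSpace ℝ (Fin (N - 1))) : V N), vs⟫_ℝ) := by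
    intro y
    exact continuous_const.add (continuous_const.mul hcont_t)
  have hcontF : ∀ y : ℝ, Continuous (F y) := by
    intro y
    exact ((hcont_base y).rpow_const (fun u => Or.inr hα0)).sub continuous_const
  have hcontF' : ∀ y : ℝ, Continuous (F' y) := by
    intro y
    refine Continuous.mul (Continuous.mul ?_ continuous_const)
      ((hcont_base y).rpow_const (fun u => Or.inr hα1))
    exact continuous_const.add (continuous_const.mul (continuous_const.mul hcont_t))
  -- pointwise bounds
  have hkey : ∀ u : Metric.sphere (0 : EuclideanSpace ℝ (Fin (N - 1))) 1, ∀ x' ∈ Metric.ball x (1/8 : ℝ),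
      (1 ≤ 1 + ‖v‖^2*(1-x'^2) + ‖vs‖^2*x'^2
          + 2*x'*Real.sqrt (1-x'^2)*‖v - vs‖*⟪(e (u : EuclideanSpace ℝ (Fin (N - 1))) : V N), vs⟫_ℝ ∧
        1 + ‖v‖^2*(1-x'^2) + ‖vs‖^2*x'^2
          + 2*x'*Real.sqrt (1-x'^2)*‖v - vs‖*⟪(e (u : EuclideanSpace ℝ (Fin (N - 1))) : V N), vs⟫_ℝ
          ≤ 3*JA*JB) ∧
      |(-(2*x'))*(‖v‖^2) + 2*x'*(‖vs‖^2)
          + (2*Real.sqrt (1-x'^2) - 2*x'^2/Real.sqrt (1-x'^2))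
            * (‖v - vs‖ * ⟪(e (u : EuclideanSpace ℝ (Fin (N - 1))) : V N), vs⟫_ℝ)| ≤ 5*JA*JB := by
    intro u x' hx'
    obtain ⟨p, a, b, ha, hb, hp, hAe, hBe, htb, htri⟩ := geom_facts N v vs e hrange u
    have h56 := hx56 x' hx'
    refine ⟨base_bounds ha hb hp hAe hBe htb (norm_nonneg _) htri h56, ?_⟩
    exact dbase_bound ha hb hp hAe hBe htb (norm_nonneg _) htri h56
  -- the bound for F'
  have hFbound : ∀ u : Metric.sphere (0 : EuclideanSpace ℝ (Fin (N - 1))) 1, ∀ x' ∈ Metric.ball x (1/8 : ℝ),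
      ‖F' x' u‖ ≤ 5*JA*JB * α * (3*JA*JB) ^ (α - 1) := by
    intro u x' hx'
    obtain ⟨⟨hb1, hb2⟩, hdb⟩ := hkey u x' hx'
    have hbase0 : (0:ℝ) ≤ 1 + ‖v‖^2*(1-x'^2) + ‖vs‖^2*x'^2
        + 2*x'*Real.sqrt (1-x'^2)*‖v - vs‖*⟪(e (u : EuclideanSpace ℝ (Fin (N - 1))) : V N), vs⟫_ℝ := by
      linarith
    have hrle : (1 + ‖v‖^2*(1-x'^2) + ‖vs‖^2*x'^2
        + 2*x'*Real.sqrt (1-x'^2)*‖v - vs‖*⟪(e (u : EuclideanSpace ℝ (Fin (N - 1))) : V N), vs⟫_ℝ) ^ (α-1)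
        ≤ (3*JA*JB) ^ (α-1) := Real.rpow_le_rpow hbase0 hb2 hα1
    simp only [hF', Real.norm_eq_abs]
    rw [abs_mul, abs_mul, abs_of_nonneg hα0,
      abs_of_nonneg (Real.rpow_nonneg hbase0 _)]
    have h5 : (0:ℝ) ≤ 5*JA*JB := by positivity
    refine mul_le_mul (mul_le_mul hdb le_rfl hα0 h5) hrle
      (Real.rpow_nonneg hbase0 _) (by positivity)
  -- integrability of F x
  have hmeasF : ∀ y : ℝ, AEStronglyMeasurable (F y) μ := fun y =>
    (hcontF y).aestronglyMeasurable
  have hintF : Integrable (F x) μ := by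
    refine Integrable.mono' (integrable_const ((3*JA*JB)^α + JA^α)) (hmeasF x)
      (Filter.Eventually.of_forall fun u => ?_)
    obtain ⟨⟨hb1, hb2⟩, -⟩ := hkey u x (Metric.mem_ball_self (by norm_num))
    have hbase0 : (0:ℝ) ≤ 1 + ‖v‖^2*(1-x^2) + ‖vs‖^2*x^2
        + 2*x*Real.sqrt (1-x^2)*‖v - vs‖*⟪(e (u : EuclideanSpace ℝ (Fin (N - 1))) : V N), vs⟫_ℝ := by
      linarith
    simp only [hF, Real.norm_eq_abs]
    have h1 : (1 + ‖v‖^2*(1-x^2) + ‖vs‖^2*x^2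
        + 2*x*Real.sqrt (1-x^2)*‖v - vs‖*⟪(e (u : EuclideanSpace ℝ (Fin (N - 1))) : V N), vs⟫_ℝ) ^ α
        ≤ (3*JA*JB)^α := Real.rpow_le_rpow hbase0 hb2 hα0
    have h2 : (0:ℝ) ≤ (1 + ‖v‖^2*(1-x^2) + ‖vs‖^2*x^2
        + 2*x*Real.sqrt (1-x^2)*‖v - vs‖*⟪(e (u : EuclideanSpace ℝ (Fin (N - 1))) : V N), vs⟫_ℝ) ^ α :=
      Real.rpow_nonneg hbase0 _
    have h3 : (0:ℝ) ≤ (1 + ‖v‖^2) ^ (α:ℝ) := Real.rpow_nonneg (by positivity) _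
    have h4 : ((1:ℝ) + ‖v‖^2) ^ (α:ℝ) = JA^α := by rw [hJA]
    calc |(1 + ‖v‖^2*(1-x^2) + ‖vs‖^2*x^2
        + 2*x*Real.sqrt (1-x^2)*‖v - vs‖*⟪(e (u : EuclideanSpace ℝ (Fin (N - 1))) : V N), vs⟫_ℝ) ^ α
        - (1 + ‖v‖^2) ^ α|
        ≤ |(1 + ‖v‖^2*(1-x^2) + ‖vs‖^2*x^2
          + 2*x*Real.sqrt (1-x^2)*‖v - vs‖*⟪(e (u : EuclideanSpace ℝ (Fin (N - 1))) : V N), vs⟫_ℝ) ^ α|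
          + |(1 + ‖v‖^2) ^ (α:ℝ)| := abs_sub _ _
      _ ≤ (3*JA*JB)^α + JA^α := by
          rw [abs_of_nonneg h2, abs_of_nonneg h3, h4]
          exact add_le_add h1 le_rfl
  -- differentiation under the integral
  have hdiff : ∀ u : Metric.sphere (0 : EuclideanSpace ℝ (Fin (N - 1))) 1, ∀ x' ∈ Metric.ball x (1/8 : ℝ), HasDerivAt (F · u) (F' x' u) x' := by
    intro u x' hx'
    have h56 := hx56 x' hx'
    have hbase := hasDerivAt_base (‖v‖ ^ 2) (‖vs‖ ^ 2) (‖v - vs‖)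
      (⟪(e (u : EuclideanSpace ℝ (Fin (N - 1))) : V N), vs⟫_ℝ) h56
    exact (hbase.rpow_const (Or.inr hα)).sub_const _
  obtain ⟨-, hderiv⟩ :=
    hasDerivAt_integral_of_dominated_loc_of_deriv_le (μ := μ) (F := F) (F' := F')
      (bound := fun _ => 5*JA*JB * α * (3*JA*JB) ^ (α - 1))
      (Metric.ball_mem_nhds x (show (0:ℝ) < 1/8 by norm_num))
      (Filter.Eventually.of_forall fun y => hmeasF y) hintF
      ((hcontF' x).aestronglyMeasurable)
      (Filter.Eventually.of_forall fun u x' hx' => hFbound u x' hx')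
      (integrable_const _)
      (Filter.Eventually.of_forall fun u x' hx' => hdiff u x' hx')
  -- identify Rfun with the parametric integral
  have hRfun : Rfun v vs e α = fun y => ∫ u, F y u ∂μ := rfl
  have hderiv' : deriv (Rfun v vs e α) x = ∫ u, F' x u ∂μ := by
    rw [hRfun]
    exact hderiv.deriv
  rw [hderiv']
  -- bound the integral
  have hxball : x ∈ Metric.ball x (1/8 : ℝ) := Metric.mem_ball_self (by norm_num)
  have hIb : |∫ u, F' x u ∂μ| ≤ T * (5*JA*JB * α * (3*JA*JB) ^ (α - 1)) := by
    rw [← Real.norm_eq_abs]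
    calc ‖∫ u, F' x u ∂μ‖ ≤ ∫ _u, (5*JA*JB * α * (3*JA*JB) ^ (α - 1)) ∂μ :=
          norm_integral_le_of_norm_le (integrable_const _)
            (Filter.Eventually.of_forall fun u => hFbound u x hxball)
      _ = T * (5*JA*JB * α * (3*JA*JB) ^ (α - 1)) := by
          rw [integral_const, smul_eq_mul, hT]; rfl
  refine hIb.trans ?_
  -- final arithmetic
  have hjapv : jap v ^ (2 * α) = JA ^ α := by
    rw [jap, ← hJA]
    rw [show (2:ℝ) * α = 2 * α from rfl, Real.rpow_mul (Real.sqrt_nonneg _),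
      show ((2:ℝ) : ℝ) = ((2:ℕ) : ℝ) by norm_num, Real.rpow_natCast,
      Real.sq_sqrt (by positivity)]
  have hjapvs : jap vs ^ (2 * α) = JB ^ α := by
    rw [jap, ← hJB]
    rw [Real.rpow_mul (Real.sqrt_nonneg _),
      show ((2:ℝ) : ℝ) = ((2:ℕ) : ℝ) by norm_num, Real.rpow_natCast,
      Real.sq_sqrt (by positivity)]
  rw [hjapv, hjapvs]
  have hmulr : JA ^ α * JB ^ α = (JA*JB) ^ α :=
    (Real.mul_rpow (le_of_lt hJA0) (le_of_lt hJB0)).symm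
  have h3r : (3*JA*JB) ^ (α - 1) = 3 ^ (α-1) * (JA*JB) ^ (α-1) := by
    rw [show (3:ℝ)*JA*JB = 3*(JA*JB) by ring,
      Real.mul_rpow (by norm_num) (by positivity)]
  have hpow : (JA*JB) ^ (α - 1) * (JA*JB) = (JA*JB) ^ α := by
    rw [← Real.rpow_add_one (by positivity : (JA*JB : ℝ) ≠ 0) (α - 1), sub_add_cancel]
  calc T * (5*JA*JB * α * (3*JA*JB) ^ (α - 1))
      = (5 * α * 3 ^ (α - 1) * T) * ((JA*JB) ^ (α-1) * (JA*JB)) := by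
        rw [h3r]; ring
    _ = (5 * α * 3 ^ (α - 1) * T) * (JA*JB) ^ α := by rw [hpow]
    _ ≤ (5 * α * 3 ^ (α - 1) * T + 1) * (JA*JB) ^ α := by
        have : (0:ℝ) ≤ (JA*JB) ^ α := Real.rpow_nonneg (by positivity) _
        nlinarith
    _ = (5 * α * 3 ^ (α - 1) * T + 1) * JA ^ α * JB ^ α := by
        rw [← hmulr]; ring
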